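/- arXiv:math/0412494 — 5 statements merged into one kernel-verified Lean document; each statement's English description precedes it below -/
import Mathlib

section
/- Suppose V = (V_{n,k}) satisfies V_{n,k} = γ_{n,k} V_{n+1,k} + V_{n+1,k+1} for 1 ≤ k ≤ n with positive coefficients γ_{n,k} = bn - ak, and suppose V_{n,k} = V_k / c_n for sequences (V_k), (c_n) with V_k > 0 for k ≤ κ for some κ ≥ 2. Then there exists a constant t such that V_{k+1}/V_k - ak = t for 1 ≤ k < κ and c_{n+1}/c_n - bn = t for all n, hence V_k = (t+a)_{k-1↑a} and c_n = (t+b)_{n-1↑b} (up to normalization V_1 = c_1 = 1). -/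
open Finset

/-- Rising factorial `(x)_{m↑β} = ∏_{j=1}^m (x + (j-1)β)`. -/
noncomputable def risingFac (x : ℝ) (m : ℕ) (β : ℝ) : ℝ := ∏ i ∈ Finset.range m, (x + i * β)

/-- If a solution of the recursion `V_{n,k} = (bn - ak) V_{n+1,k} + V_{n+1,k+1}` is of
the product form `V_{n,k} = V_k / c_n` with `V_k > 0` for `k ≤ κ` (some `κ ≥ 2`) and
`c_n > 0`, then there is a constant `t` with `V_{k+1}/V_k - ak = t` for `1 ≤ k < κ` and
`c_{n+1}/c_n - bn = t` for all `n ≥ 1`; hence, under the normalisation `V_1 = c_1 = 1`,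
`V_k = (t+a)_{k-1↑a}` for `k ≤ κ` and `c_n = (t+b)_{n-1↑b}`. -/
theorem stmt_5 (a b : ℝ) (hab : a < b) (hb : 0 ≤ b)
    (κ : ℕ) (hκ : 2 ≤ κ)
    (V c : ℕ → ℝ) (Vnk : ℕ → ℕ → ℝ)
    (hform : ∀ n k : ℕ, 1 ≤ k → k ≤ n → Vnk n k = V k / c n)
    (hVpos : ∀ k : ℕ, 1 ≤ k → k ≤ κ → 0 < V k)
    (hcpos : ∀ n : ℕ, 1 ≤ n → 0 < c n)
    (hrec : ∀ n k : ℕ, 1 ≤ k → k ≤ n →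
      Vnk n k = (b * n - a * k) * Vnk (n + 1) k + Vnk (n + 1) (k + 1)) :
    ∃ t : ℝ,
      (∀ k : ℕ, 1 ≤ k → k < κ → V (k + 1) / V k - a * k = t) ∧
      (∀ n : ℕ, 1 ≤ n → c (n + 1) / c n - b * n = t) ∧
      (V 1 = 1 → ∀ k : ℕ, 1 ≤ k → k ≤ κ → V k = risingFac (t + a) (k - 1) a) ∧
      (c 1 = 1 → ∀ n : ℕ, 1 ≤ n → c n = risingFac (t + b) (n - 1) b) := by

  -- Key relation: for 1 ≤ k ≤ n with k ≤ κ,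
  -- V(k+1)/V k - a*k = c(n+1)/c n - b*n
  have key : ∀ n k : ℕ, 1 ≤ k → k ≤ n → k ≤ κ →
      V (k + 1) / V k - a * k = c (n + 1) / c n - b * n := by
    intro n k hk1 hkn hkκ
    have hVk := hVpos k hk1 hkκ
    have hcn := hcpos n (le_trans hk1 hkn)
    have hcn1 := hcpos (n + 1) (by omega)
    have h := hrec n k hk1 hkn
    rw [hform n k hk1 hkn, hform (n+1) k hk1 (by omega),
        hform (n+1) (k+1) (by omega) (by omega)] at h
    field_simp at h ⊢
    nlinarith [h]
  refine ⟨c 2 / c 1 - b, ?_, ?_, ?_, ?_⟩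
  · intro k hk1 hkκ
    have h1 := key k k hk1 le_rfl (le_of_lt hkκ)
    have h2 := key 1 1 le_rfl le_rfl (by omega)
    -- from h2 : V 2 / V 1 - a*1 = c 2 / c 1 - b*1
    have h3 := key k 1 le_rfl (by omega) (by omega)
    push_cast at h1 h2 h3 ⊢
    linarith
  · intro n hn1
    have h1 := key n 1 le_rfl hn1 (by omega)
    have h2 := key 1 1 le_rfl le_rfl (by omega)
    push_cast at h1 h2 ⊢
    linarith
  all_goals set t := c 2 / c 1 - b with ht
  · -- V k = risingFac (t+a) (k-1) a
    intro hV1 k hk1 hkκ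
    have step : ∀ m : ℕ, 1 ≤ m → m < κ → V (m + 1) = V m * (t + a * m) := by
      intro m hm1 hmκ
      have h1 := key m m hm1 le_rfl (le_of_lt hmκ)
      have h2 := key m 1 le_rfl hm1 (by omega)
      have h3 := key 1 1 le_rfl le_rfl (by omega)
      have hVm := hVpos m hm1 (le_of_lt hmκ)
      have : V (m + 1) / V m - a * m = t := by
        rw [ht]; push_cast at h1 h2 h3 ⊢; linarith
      field_simp at this
      linarith
    have main : ∀ m : ℕ, m + 1 ≤ κ → V (m + 1) = risingFac (t + a) m a := by
      intro m
      induction m with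
      | zero => intro _; simpa [risingFac] using hV1
      | succ p ih =>
        intro hp
        rw [step (p + 1) (by omega) (by omega), ih (by omega)]
        simp only [risingFac, Finset.prod_range_succ]
        push_cast; ring
    obtain ⟨m, rfl⟩ : ∃ m, k = m + 1 := ⟨k - 1, by omega⟩
    simpa using main m hkκ
  · -- c n = risingFac (t+b) (n-1) b
    intro hc1 n hn1
    have step : ∀ m : ℕ, 1 ≤ m → c (m + 1) = c m * (t + b * m) := by
      intro m hm1
      have h1 := key m 1 le_rfl hm1 (by omega)
      have h2 := key 1 1 le_rfl le_rfl (by omega)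
      have hcm := hcpos m hm1
      have : c (m + 1) / c m - b * m = t := by
        rw [ht]; push_cast at h1 h2 ⊢; linarith
      field_simp at this
      linarith
    have main : ∀ m : ℕ, c (m + 1) = risingFac (t + b) m b := by
      intro m
      induction m with
      | zero => simpa [risingFac] using hc1
      | succ p ih =>
        rw [step (p + 1) (by omega), ih]
        simp only [risingFac, Finset.prod_range_succ]
        push_cast; ring
    obtain ⟨m, rfl⟩ : ∃ m, n = m + 1 := ⟨n - 1, by omega⟩
    simpa using main m
end

section
/- Fix ν ≥ n ≥ 1. In a generalized Pascal graph with nonnegative multiplicities, the ratio V^{ν,κ}_{n,1} = d^{ν,κ}_{n,1}/d^{ν,κ} is nonincreasing in κ (for κ with d^{ν,κ} > 0). -/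
/-- Stochastic monotonicity: in a generalised Pascal graph with nonnegative
multiplicities `γ, δ`, for fixed `ν ≥ n ≥ 1` the ratio
`V^{ν,κ}_{n,1} = d^{ν,κ}_{n,1} / d^{ν,κ}` (conditional probability of `K_n = 1` given
`K_ν = κ`) is nonincreasing in `κ`, over those `κ` with `d^{ν,κ} > 0`. Here `d` is the
total path weight from the root `(1,1)` and `d1` the total path weight from `(n,1)`. -/
theorem stmt_14 (γ δ : ℕ → ℕ → ℝ)
    (hγ : ∀ m j, 0 ≤ γ m j) (hδ : ∀ m j, 0 ≤ δ m j)
    (n : ℕ) (hn : 1 ≤ n)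
    (d d1 : ℕ → ℕ → ℝ)
    (hdbase : ∀ κ : ℕ, d 1 κ = if κ = 1 then 1 else 0)
    (hd0 : ∀ m : ℕ, d m 0 = 0)
    (hdrec : ∀ m κ : ℕ, 1 ≤ m →
      d (m + 1) (κ + 1) = δ m κ * d m κ + γ m (κ + 1) * d m (κ + 1))
    (hd1base : ∀ κ : ℕ, d1 n κ = if κ = 1 then 1 else 0)
    (hd10 : ∀ m : ℕ, d1 m 0 = 0)
    (hd1rec : ∀ m κ : ℕ, n ≤ m →
      d1 (m + 1) (κ + 1) = δ m κ * d1 m κ + γ m (κ + 1) * d1 m (κ + 1)) :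
    ∀ ν : ℕ, n ≤ ν → ∀ κ κ' : ℕ, κ ≤ κ' →
      0 < d ν κ → 0 < d ν κ' →
      d1 ν κ' / d ν κ' ≤ d1 ν κ / d ν κ := by
  -- nonnegativity of d
  have hdnn : ∀ ν : ℕ, 1 ≤ ν → ∀ κ, 0 ≤ d ν κ := by
    intro ν hν
    induction ν, hν using Nat.le_induction with
    | base => intro κ; rw [hdbase]; split <;> norm_num
    | succ m hm ih =>
      intro κ
      cases κ with
      | zero => rw [hd0]
      | succ a =>
        rw [hdrec m a hm]
        have := ih a; have := ih (a + 1)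
        have := hγ m (a + 1); have := hδ m a
        nlinarith
  -- nonnegativity of d1
  have hd1nn : ∀ ν : ℕ, n ≤ ν → ∀ κ, 0 ≤ d1 ν κ := by
    intro ν hν
    induction ν, hν using Nat.le_induction with
    | base => intro κ; rw [hd1base]; split <;> norm_num
    | succ m hm ih =>
      intro κ
      cases κ with
      | zero => rw [hd10]
      | succ a =>
        rw [hd1rec m a hm]
        have := ih a; have := ih (a + 1)
        have := hγ m (a + 1); have := hδ m a
        nlinarith
  -- cross inequality
  have key : ∀ ν : ℕ, n ≤ ν → ∀ κ κ' : ℕ, κ ≤ κ' →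
      d1 ν κ' * d ν κ ≤ d1 ν κ * d ν κ' := by
    intro ν hν
    induction ν, hν using Nat.le_induction with
    | base =>
      intro κ κ' hκ
      rw [hd1base, hd1base]
      by_cases h' : κ' = 1
      · subst h'
        interval_cases κ
        · simp [hd0]
        · simp
      · simp only [h', if_false, zero_mul]
        split
        · exact mul_nonneg (by norm_num) (hdnn n hn κ')
        · simp
    | succ m hm ih =>
      have hm1 : 1 ≤ m := le_trans hn hm
      intro κ κ' hκ
      cases κ with
      | zero =>
        rw [hd0, hd10, mul_zero, zero_mul]
      | succ a =>
        obtain ⟨b, rfl⟩ : ∃ b, κ' = b + 1 := ⟨κ' - 1, by omega⟩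
        have hab : a ≤ b := by omega
        rw [hdrec m a hm1, hdrec m b hm1, hd1rec m a hm, hd1rec m b hm]
        rcases eq_or_lt_of_le hab with rfl | hab'
        · ring_nf; exact le_refl _
        · have hab1 : a + 1 ≤ b := hab'
          have i1 := ih a b hab
          have i2 := ih (a + 1) (b + 1) (by omega)
          have i3 := ih (a + 1) b hab1
          have i4 := ih a (b + 1) (by omega)
          have g1 := hγ m (a + 1); have g2 := hγ m (b + 1)
          have e1 := hδ m a; have e2 := hδ m b
          nlinarith [mul_le_mul_of_nonneg_left i1 (mul_nonneg e1 e2),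
            mul_le_mul_of_nonneg_left i2 (mul_nonneg g1 g2),
            mul_le_mul_of_nonneg_left i3 (mul_nonneg e2 g1),
            mul_le_mul_of_nonneg_left i4 (mul_nonneg e1 g2)]
  intro ν hν κ κ' hκ hdκ hdκ'
  rw [div_le_div_iff₀ hdκ' hdκ]
  exact key ν hν κ κ' hκ
end

section
/- For 0 < α < 1 and a composition (λ_1,...,λ_k) of n, the EPPF values over the number of blocks sum correctly: Σ_{k=1}^n V_{n,k} B_{n,k}(W) = 1 where V_{n,k} = φ_{n,k}(α,θ), W_j = (1-α)_{j-1↑}, and B_{n,k}(W) = (n!/k!) Σ_{compositions (λ_1,...,λ_k) of n} ∏_j W_{λ_j}/λ_j! is the partial Bell polynomial. Equivalently, Σ_{k=1}^n φ_{n,k}(α,θ) [n k]_α = 1. -/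
open Finset

/-- For `0 < α < 1` and `θ > 0`, the EPPF values sum to one over the number of blocks:
`Σ_{k=1}^n φ_{n,k}(α,θ) [n k]_α = 1`, equivalently
`(θ+1)_{n-1↑} = Σ_{k=1}^n (θ+α)_{k-1↑α} [n k]_α`, where `[n k]_α` are the generalised
Stirling numbers (partial Bell polynomials of the weights `(1-α)_{j-1↑}`). -/
theorem stmt_15 (α θ : ℝ) (hα0 : 0 < α) (hα1 : α < 1) (hθ : 0 < θ)
    (S : ℕ → ℕ → ℝ)
    (hbase : S 1 1 = 1)
    (hzero : ∀ n k : ℕ, ¬(1 ≤ k ∧ k ≤ n) → S n k = 0)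
    (hrec : ∀ n k : ℕ, 1 ≤ n → 1 ≤ k →
      S (n + 1) k = S n (k - 1) + ((n : ℝ) - α * k) * S n k) :
    ∀ n : ℕ, 1 ≤ n →
      ∑ k ∈ Finset.Icc 1 n,
        (risingFac (θ + α) (k - 1) α / risingFac (θ + 1) (n - 1) 1) * S n k = 1 := by
  have key : ∀ n : ℕ, 1 ≤ n →
      ∑ j ∈ Finset.range n, risingFac (θ + α) j α * S n (j+1)
        = risingFac (θ + 1) (n - 1) 1 := by
    intro n hn
    induction n, hn using Nat.le_induction with
    | base => simp [risingFac, hbase]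
    | succ n hn ih =>
      have h0 : S n 0 = 0 := hzero n 0 (by omega)
      have htop : S n (n+1) = 0 := hzero n (n+1) (by omega)
      have hstep : ∑ j ∈ Finset.range (n+1), risingFac (θ + α) j α * S (n+1) (j+1)
          = ((θ : ℝ) + n) * risingFac (θ + 1) (n - 1) 1 := by
        calc ∑ j ∈ Finset.range (n+1), risingFac (θ + α) j α * S (n+1) (j+1)
            = ∑ j ∈ Finset.range (n+1), (risingFac (θ + α) j α * S n j
                + risingFac (θ + α) j α * (((n:ℝ) - α * (j+1)) * S n (j+1))) := by
              refine Finset.sum_congr rfl fun j _ => ?_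
              rw [hrec n (j+1) hn (by omega)]
              simp only [Nat.add_sub_cancel]
              push_cast
              ring
          _ = (∑ j ∈ Finset.range (n+1), risingFac (θ + α) j α * S n j)
              + ∑ j ∈ Finset.range (n+1), risingFac (θ + α) j α * (((n:ℝ) - α * (j+1)) * S n (j+1)) :=
              Finset.sum_add_distrib
          _ = (∑ j ∈ Finset.range n, risingFac (θ + α) (j+1) α * S n (j+1))
              + ∑ j ∈ Finset.range n, risingFac (θ + α) j α * (((n:ℝ) - α * (j+1)) * S n (j+1)) := by
              rw [Finset.sum_range_succ' _ n, Finset.sum_range_succ]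
              simp [h0, htop]
          _ = ∑ j ∈ Finset.range n, ((θ : ℝ) + n) * (risingFac (θ + α) j α * S n (j+1)) := by
              rw [← Finset.sum_add_distrib]
              refine Finset.sum_congr rfl fun j _ => ?_
              rw [show risingFac (θ + α) (j+1) α
                    = risingFac (θ + α) j α * (θ + α + j * α) from Finset.prod_range_succ _ _]
              push_cast
              ring
          _ = ((θ : ℝ) + n) * risingFac (θ + 1) (n - 1) 1 := by
              rw [← Finset.mul_sum, ih]
      rw [hstep]
      have hn' : n - 1 + 1 = n := by omega
      rw [show (n + 1 - 1) = (n - 1) + 1 by omega]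
      rw [show risingFac (θ + 1) (n - 1 + 1) 1
            = risingFac (θ + 1) (n-1) 1 * (θ + 1 + (n-1 : ℕ) * 1) from Finset.prod_range_succ _ _]
      have hc : ((n - 1 : ℕ) : ℝ) = (n : ℝ) - 1 := by
        push_cast [Nat.cast_sub hn]; ring
      rw [hc]; ring
  intro n hn
  have hP : 0 < risingFac (θ + 1) (n - 1) 1 := by
    apply Finset.prod_pos
    intro i _
    positivity
  rw [show Finset.Icc 1 n = Finset.Ico 1 (n+1) by rw [Finset.Ico_add_one_right_eq_Icc],
      Finset.sum_Ico_eq_sum_range]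
  simp only [Nat.add_sub_cancel]
  have : ∀ j, risingFac (θ + α) (1 + j - 1) α = risingFac (θ + α) j α := by
    intro j; congr 1; omega
  calc ∑ j ∈ Finset.range n, risingFac (θ + α) (1 + j - 1) α / risingFac (θ + 1) (n - 1) 1 * S n (1 + j)
      = (∑ j ∈ Finset.range n, risingFac (θ + α) j α * S n (j+1)) / risingFac (θ + 1) (n - 1) 1 := by
        rw [Finset.sum_div]
        refine Finset.sum_congr rfl fun j _ => ?_
        rw [this j, show 1 + j = j + 1 by omega]
        ring
    _ = 1 := by rw [key n hn]; field_simp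
end

section
/- For α ≠ 0, the generalized Stirling number [n k]_α equals n!/(α^k k!) times the coefficient of x^n in the power series expansion of (1-(1-x)^α)^k. -/
open Finset

/-- The formal binomial series of `(1-x)^α`:
`Σ_n (-1)^n (α choose n) x^n` with `(α choose n) = (∏_{i<n} (α - i))/n!`. -/
noncomputable def oneSubXPow (α : ℝ) : PowerSeries ℝ :=
  PowerSeries.mk fun n =>
    (-1) ^ n * (∏ i ∈ Finset.range n, (α - i)) / (Nat.factorial n : ℝ)

open PowerSeries in
lemma ode_g (α : ℝ) : (1 - X) * d⁄dX ℝ (oneSubXPow α) = C (R := ℝ) (-α) * oneSubXPow α := by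
  ext n
  rw [sub_mul, one_mul, map_sub, coeff_C_mul, coeff_derivative]
  have hx : coeff (R := ℝ) n (X * d⁄dX ℝ (oneSubXPow α)) = if n = 0 then 0 else (n:ℝ) * coeff (R := ℝ) n (oneSubXPow α) := by
    cases n with
    | zero => simp
    | succ m =>
      rw [coeff_succ_X_mul, coeff_derivative]
      simp [mul_comm]
  rw [hx]
  have hfac : ∀ m : ℕ, ((Nat.factorial m : ℝ)) ≠ 0 := fun m => by
    exact_mod_cast Nat.factorial_ne_zero m
  simp only [oneSubXPow, coeff_mk]
  rw [Finset.prod_range_succ]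
  cases n with
  | zero => simp [Nat.factorial]
  | succ m =>
    simp only [if_neg (Nat.succ_ne_zero m)]
    rw [Nat.factorial_succ]
    push_cast
    field_simp
    ring

open PowerSeries in
lemma ode_fk (α : ℝ) (m : ℕ) :
    (1 - X) * d⁄dX ℝ ((1 - oneSubXPow α) ^ (m + 1))
      = C (R := ℝ) (α * (m + 1)) * ((1 - oneSubXPow α) ^ m - (1 - oneSubXPow α) ^ (m + 1)) := by
  rw [Derivation.leibniz_pow]
  simp only [Nat.add_sub_cancel, smul_eq_mul, nsmul_eq_mul]
  have hD : d⁄dX ℝ (1 - oneSubXPow α) = - d⁄dX ℝ (oneSubXPow α) := by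
    rw [map_sub]; simp
  rw [hD]
  have h1 := ode_g α
  rw [map_neg] at h1
  have hC : C (R := ℝ) (α * (m + 1)) = C (R := ℝ) α * ((m : ℝ⟦X⟧) + 1) := by
    rw [map_mul, map_add, map_natCast, map_one]
  rw [hC]
  push_cast
  linear_combination (-(((m : ℝ⟦X⟧) + 1)) * (1 - oneSubXPow α) ^ m) * h1

open PowerSeries in
lemma coeff_rec (α : ℝ) (m n : ℕ) :
    ((n : ℝ) + 1) * coeff (R := ℝ) (n + 1) ((1 - oneSubXPow α) ^ (m + 1))
      = ((n : ℝ) - α * (m + 1)) * coeff (R := ℝ) n ((1 - oneSubXPow α) ^ (m + 1))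
        + α * (m + 1) * coeff (R := ℝ) n ((1 - oneSubXPow α) ^ m) := by
  have h := ode_fk α m
  have h2 := congrArg (coeff (R := ℝ) n) h
  rw [sub_mul, one_mul, map_sub, coeff_derivative, coeff_C_mul, map_sub] at h2
  have hx : coeff (R := ℝ) n (X * d⁄dX ℝ ((1 - oneSubXPow α) ^ (m + 1)))
      = if n = 0 then 0 else (n : ℝ) * coeff (R := ℝ) n ((1 - oneSubXPow α) ^ (m + 1)) := by
    cases n with
    | zero => simp
    | succ j => rw [coeff_succ_X_mul, coeff_derivative]; simp [mul_comm]
  rw [hx] at h2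
  cases n with
  | zero => simp only [if_pos rfl, Nat.cast_zero] at h2 ⊢; push_cast at h2 ⊢; linarith [h2]
  | succ j =>
    simp only [if_neg (Nat.succ_ne_zero j)] at h2
    push_cast at h2 ⊢
    linarith [h2]

lemma coeff_lt (α : ℝ) (k n : ℕ) (h : n < k) :
    PowerSeries.coeff (R := ℝ) n ((1 - oneSubXPow α) ^ k) = 0 := by
  have hX : (PowerSeries.X : PowerSeries ℝ) ∣ (1 - oneSubXPow α) := by
    rw [PowerSeries.X_dvd_iff]
    simp [oneSubXPow]
  obtain ⟨p, hp⟩ := pow_dvd_pow_of_dvd hX k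
  rw [hp, PowerSeries.coeff_X_pow_mul', if_neg (by omega)]

lemma coeff_one_f (α : ℝ) : PowerSeries.coeff (R := ℝ) 1 (1 - oneSubXPow α) = α := by
  rw [map_sub]
  simp [oneSubXPow, PowerSeries.coeff_one]

/-- For `α ≠ 0`, the generalised Stirling number `[n k]_α` (defined by
`[n+1,k]_α = [n,k-1]_α + (n - αk)[n,k]_α`, `[1,1]_α = 1`, zero outside `1 ≤ k ≤ n`)
equals `n!/(α^k k!)` times the coefficient of `x^n` in the formal power series
`(1-(1-x)^α)^k`. -/
theorem stmt_16 (α : ℝ) (hα : α ≠ 0) (S : ℕ → ℕ → ℝ)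
    (hbase : S 1 1 = 1)
    (hzero : ∀ n k : ℕ, ¬(1 ≤ k ∧ k ≤ n) → S n k = 0)
    (hrec : ∀ n k : ℕ, 1 ≤ n → 1 ≤ k →
      S (n + 1) k = S n (k - 1) + ((n : ℝ) - α * k) * S n k) :
    ∀ n k : ℕ, 1 ≤ k → k ≤ n →
      S n k = (Nat.factorial n : ℝ) / (α ^ k * (Nat.factorial k : ℝ)) *
        PowerSeries.coeff (R := ℝ) n ((1 - oneSubXPow α) ^ k) := by

  intro n
  induction n with
  | zero => intro k hk hkn; omega
  | succ n ih =>
    intro k hk hkn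
    obtain ⟨m, rfl⟩ : ∃ m, k = m + 1 := ⟨k - 1, by omega⟩
    rcases Nat.eq_zero_or_pos n with hn | hn
    · subst hn
      have hm : m = 0 := by omega
      subst hm
      norm_num [hbase, coeff_one_f, Nat.factorial]
      field_simp
    · have h1 : S n m = (Nat.factorial n : ℝ) / (α ^ m * (Nat.factorial m : ℝ)) *
          PowerSeries.coeff (R := ℝ) n ((1 - oneSubXPow α) ^ m) := by
        rcases Nat.eq_zero_or_pos m with hm | hm
        · subst hm
          rw [hzero n 0 (by omega), pow_zero (1 - oneSubXPow α), PowerSeries.coeff_one, if_neg (by omega)]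
          ring
        · exact ih m hm (by omega)
      have h2 : S n (m + 1) = (Nat.factorial n : ℝ) / (α ^ (m+1) * (Nat.factorial (m+1) : ℝ)) *
          PowerSeries.coeff (R := ℝ) n ((1 - oneSubXPow α) ^ (m+1)) := by
        rcases Nat.lt_or_ge n (m + 1) with hm | hm
        · rw [hzero n (m+1) (by omega), coeff_lt α (m+1) n (by omega), mul_zero]
        · exact ih (m+1) (by omega) hm
      rw [hrec n (m+1) hn (by omega)]
      simp only [Nat.add_sub_cancel]
      rw [h1, h2]
      have hc := coeff_rec α m n
      have hn1 : (n:ℝ) + 1 ≠ 0 := by positivity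
      have hcc : PowerSeries.coeff (R := ℝ) (n+1) ((1 - oneSubXPow α) ^ (m+1))
          = (((n:ℝ) - α*(m+1)) * PowerSeries.coeff (R := ℝ) n ((1 - oneSubXPow α) ^ (m+1))
             + α*(m+1) * PowerSeries.coeff (R := ℝ) n ((1 - oneSubXPow α) ^ m)) / ((n:ℝ)+1) := by
        field_simp
        linarith [hc]
      push_cast
      rw [hcc]
      have hfn : (Nat.factorial n : ℝ) ≠ 0 := by exact_mod_cast Nat.factorial_ne_zero n
      have hfm : (Nat.factorial m : ℝ) ≠ 0 := by exact_mod_cast Nat.factorial_ne_zero m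
      rw [Nat.factorial_succ n, Nat.factorial_succ m]
      have hα' : α ^ m ≠ 0 := pow_ne_zero _ hα
      have hm1 : (m:ℝ) + 1 ≠ 0 := by positivity
      push_cast
      field_simp
      ring
end

section
/- For any probability measure q on {1, 2, ..., ∞} and α < 0, the sequence u_n = Σ_{m=1}^∞ q_m / (m|α|+1)_{n-1↑} (with the m = ∞ term contributing q_∞·1(n=1)-type limit, i.e., interpreted as 0 for n ≥ 2) yields, via the iterated differences V_{n,1} = u_n and V_{n+1,k+1} = V_{n,k} - (n - αk)V_{n+1,k}, a nonnegative array (V_{n,k})_{1≤k≤n}. -/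
/-!
The array `V` depends linearly on `u`, and the recurrence is the same for every mixture
component. For the component `m` (with `θ = m|α|`) it is solved explicitly by
`φ_{n,k}(α, θ) = (θ + α)(θ + 2α)⋯(θ + (k-1)α) / (θ + 1)_{n-1↑}`, whose numerator vanishes for
`k > m` and is a product of nonnegative factors for `k ≤ m`; the component `m = ∞` gives the
limit `θ → ∞`, the indicator of `n = k`. Hence `V_{n,k}` is a nonnegative mixture of
nonnegative numbers.
-/

open Finset

/-- Rising factorial `(x)_{m↑} = x(x+1)⋯(x+m-1)`. -/
noncomputable def risingFac1 (x : ℝ) (m : ℕ) : ℝ := ∏ i ∈ Finset.range m, (x + i)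

lemma risingFac1_pos {x : ℝ} (hx : 0 < x) (m : ℕ) : 0 < risingFac1 x m :=
  prod_pos fun i _ => by positivity

lemma one_le_risingFac1 {x : ℝ} (hx : 1 ≤ x) (m : ℕ) : 1 ≤ risingFac1 x m :=
  one_le_prod fun i _ => le_add_of_le_of_nonneg hx i.cast_nonneg

lemma risingFac1_succ (x : ℝ) (m : ℕ) : risingFac1 x (m + 1) = risingFac1 x m * (x + m) :=
  prod_range_succ _ _

noncomputable def phi (α θ : ℝ) (n k : ℕ) : ℝ :=
  (∏ j ∈ range (k - 1), (θ + α * (j + 1))) / risingFac1 (θ + 1) (n - 1)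

lemma phi_one (α θ : ℝ) (n : ℕ) : phi α θ n 1 = 1 / risingFac1 (θ + 1) (n - 1) := by
  simp [phi]

lemma phi_succ_succ (α : ℝ) {θ : ℝ} (hθ : 0 < θ + 1) {n k : ℕ} (hn : 1 ≤ n) (hk : 1 ≤ k) :
    phi α θ (n + 1) (k + 1) = phi α θ n k - ((n : ℝ) - α * k) * phi α θ (n + 1) k := by
  obtain ⟨n, rfl⟩ := Nat.exists_eq_add_of_le' hn
  obtain ⟨k, rfl⟩ := Nat.exists_eq_add_of_le' hk
  have hD := (risingFac1_pos hθ n).ne'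
  have hθn : θ + 1 + n ≠ 0 := by have : (0 : ℝ) ≤ n := n.cast_nonneg; linarith
  simp only [phi, Nat.add_sub_cancel, prod_range_succ, risingFac1_succ]
  push_cast
  field_simp
  ring

lemma prod_natMul_abs_add_mul_nonneg {α : ℝ} (hα : α < 0) {m : ℕ} (hm : 1 ≤ m) (r : ℕ) :
    0 ≤ ∏ j ∈ range r, ((m : ℝ) * |α| + α * (j + 1)) := by
  rw [abs_of_neg hα]
  rcases le_or_gt r m with hr | hr
  · refine prod_nonneg fun j hj => ?_
    have : (j : ℝ) + 1 ≤ m := by have := mem_range.1 hj; norm_cast; omega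
    nlinarith
  · refine (prod_eq_zero (mem_range.2 (by omega : m - 1 < r)) ?_).ge
    push_cast [hm]
    ring

lemma phi_natMul_abs_nonneg {α : ℝ} (hα : α < 0) {m : ℕ} (hm : 1 ≤ m) (n k : ℕ) :
    0 ≤ phi α (m * |α|) n k :=
  div_nonneg (prod_natMul_abs_add_mul_nonneg hα hm _)
    (risingFac1_pos (by positivity) _).le

lemma hasSum_of_hasSum_first_column {ι R : Type*} [Ring R] [TopologicalSpace R]
    [IsTopologicalRing R] {c : ℕ → ℕ → R} {f : ι → ℕ → ℕ → R} {W : ℕ → ℕ → R}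
    (hf : ∀ i n k, 1 ≤ k → k ≤ n → f i (n + 1) (k + 1) = f i n k - c n k * f i (n + 1) k)
    (hW : ∀ n k, 1 ≤ k → k ≤ n → W (n + 1) (k + 1) = W n k - c n k * W (n + 1) k)
    (h1 : ∀ n, 1 ≤ n → HasSum (fun i => f i n 1) (W n 1)) {n k : ℕ} (hk : 1 ≤ k)
    (hkn : k ≤ n) : HasSum (fun i => f i n k) (W n k) := by
  induction k, hk using Nat.le_induction generalizing n with
  | base => exact h1 n hkn
  | succ k hk ih =>
    obtain ⟨n, rfl⟩ := Nat.exists_eq_add_of_le' (hk.trans (Nat.le_of_succ_le hkn))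
    have hkn' : k ≤ n := by omega
    rw [hW n k hk hkn',
      show (fun i => f i (n + 1) (k + 1)) = _ from funext fun i => hf i n k hk hkn']
    exact (ih hkn').sub ((ih (n.le_succ.trans' hkn')).mul_left (c n k))

lemma hasSum_mul_phi_one (α : ℝ) {q θ : ℕ → ℝ} (hq : ∀ m, 0 ≤ q m) (hθ : ∀ m, 0 ≤ θ m)
    (hsum : Summable q) (n : ℕ) :
    HasSum (fun m => q m * phi α (θ m) n 1) (∑' m, q m / risingFac1 (θ m + 1) (n - 1)) := by
  have hterm (m : ℕ) : q m * phi α (θ m) n 1 ≤ q m := by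
    have hD := one_le_risingFac1 (le_add_of_nonneg_left (hθ m)) (n - 1)
    rw [phi_one, mul_one_div]
    exact div_le_self (hq m) hD
  have hnonneg (m : ℕ) : 0 ≤ q m * phi α (θ m) n 1 := by
    rw [phi_one, mul_one_div]
    exact div_nonneg (hq m) (risingFac1_pos (by linarith [hθ m]) _).le
  simpa only [phi_one, mul_one_div] using (hsum.of_nonneg_of_le hnonneg hterm).hasSum

theorem stmt_17_general (α : ℝ) (hα : α < 0)
    (q : ℕ → ℝ) (qinf : ℝ)
    (hq : ∀ m : ℕ, 1 ≤ m → 0 ≤ q m) (hqinf : 0 ≤ qinf)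
    (hsum : Summable (fun m : ℕ => q (m + 1)))
    (u : ℕ → ℝ)
    (hu : ∀ n : ℕ, 1 ≤ n →
      u n = (∑' m : ℕ, q (m + 1) / risingFac1 ((m + 1 : ℕ) * |α| + 1) (n - 1)) +
        (if n = 1 then qinf else 0))
    (V : ℕ → ℕ → ℝ)
    (hV1 : ∀ n : ℕ, 1 ≤ n → V n 1 = u n)
    (hVrec : ∀ n k : ℕ, 1 ≤ k → k ≤ n →
      V (n + 1) (k + 1) = V n k - ((n : ℝ) - α * k) * V (n + 1) k) :
    ∀ n k : ℕ, 1 ≤ k → k ≤ n → 0 ≤ V n k := by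
  set θ : ℕ → ℝ := fun m => ((m + 1 : ℕ) : ℝ) * |α|
  have hθ (m : ℕ) : 0 ≤ θ m := by positivity
  have hq' (m : ℕ) : 0 ≤ q (m + 1) := hq (m + 1) m.succ_pos
  have hphi (m n k : ℕ) (hk : 1 ≤ k) (hkn : k ≤ n) :
      q (m + 1) * phi α (θ m) (n + 1) (k + 1) =
        q (m + 1) * phi α (θ m) n k - ((n : ℝ) - α * k) * (q (m + 1) * phi α (θ m) (n + 1) k) := by
    rw [phi_succ_succ α (by linarith [hθ m]) (hk.trans hkn) hk]
    ring
  have hWrec (n k : ℕ) (hk : 1 ≤ k) (hkn : k ≤ n) :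
      V (n + 1) (k + 1) - qinf * (if n + 1 = k + 1 then 1 else 0) =
        V n k - qinf * (if n = k then 1 else 0) -
          ((n : ℝ) - α * k) * (V (n + 1) k - qinf * if n + 1 = k then 1 else 0) := by
    rw [hVrec n k hk hkn]
    split_ifs <;> first | omega | ring
  have hfirst (n : ℕ) (hn : 1 ≤ n) :
      HasSum (fun m => q (m + 1) * phi α (θ m) n 1) (V n 1 - qinf * if n = 1 then 1 else 0) := by
    convert hasSum_mul_phi_one α hq' hθ hsum n using 1
    rw [hV1 n hn, hu n hn]
    split_ifs <;> ring
  intro n k hk hkn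
  have hmix := hasSum_of_hasSum_first_column (f := fun m n k => q (m + 1) * phi α (θ m) n k)
    (W := fun n k => V n k - qinf * if n = k then 1 else 0) hphi hWrec hfirst hk hkn
  have := hmix.nonneg fun m => mul_nonneg (hq' m) (phi_natMul_abs_nonneg hα m.succ_pos n k)
  split_ifs at this <;> nlinarith

/-- For `α < 0` and any probability distribution `q` on `{1,2,…,∞}`, the sequence
`u_n = Σ_{m=1}^∞ q_m / (m|α|+1)_{n-1↑}` (the `m = ∞` term contributing `q_∞` at `n = 1`
and `0` for `n ≥ 2`) generates, via `V_{n,1} = u_n` and the iterated differences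
`V_{n+1,k+1} = V_{n,k} - (n - αk) V_{n+1,k}`, a nonnegative array `(V_{n,k})_{1≤k≤n}`. -/
theorem stmt_17 (α : ℝ) (hα : α < 0)
    (q : ℕ → ℝ) (qinf : ℝ)
    (hq : ∀ m : ℕ, 1 ≤ m → 0 ≤ q m) (hqinf : 0 ≤ qinf)
    (hsum : Summable (fun m : ℕ => q (m + 1)))
    (htotal : (∑' m : ℕ, q (m + 1)) + qinf = 1)
    (u : ℕ → ℝ)
    (hu : ∀ n : ℕ, 1 ≤ n →
      u n = (∑' m : ℕ, q (m + 1) / risingFac1 ((m + 1 : ℕ) * |α| + 1) (n - 1)) +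
        (if n = 1 then qinf else 0))
    (V : ℕ → ℕ → ℝ)
    (hV1 : ∀ n : ℕ, 1 ≤ n → V n 1 = u n)
    (hVrec : ∀ n k : ℕ, 1 ≤ k → k ≤ n →
      V (n + 1) (k + 1) = V n k - ((n : ℝ) - α * k) * V (n + 1) k) :
    ∀ n k : ℕ, 1 ≤ k → k ≤ n → 0 ≤ V n k :=
  stmt_17_general α hα q qinf hq hqinf hsum u hu V hV1 hVrec
end
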